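/- arXiv:2010.13180 — 3 statements merged into one kernel-verified Lean document; each statement's English description precedes it below -/
import Mathlib

section
/- For every integer N ≥ 1 and every interval R = [a, b] with 0 ≤ a ≤ b ≤ N−1, the canonical set Z(R) contains at most 2·⌈log₂ N⌉ + 1 intervals. (This is the claim that any subarray of [0, N−1] can be represented as a disjoint union of O(log N) segment-tree nodes.) -/
/-- The nodes of the segment tree over `[0, N-1]`, represented as pairs `(l, r)`
of endpoints: `(0, N-1)` is the root, and every node `(l, r)` with `l < r` has
children `(l, m)` and `(m+1, r)` where `m = ⌊(l+r)/2⌋`. -/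
inductive SegNode (N : ℕ) : ℕ × ℕ → Prop
  | root : SegNode N (0, N - 1)
  | left {l r : ℕ} : SegNode N (l, r) → l < r → SegNode N (l, (l + r) / 2)
  | right {l r : ℕ} : SegNode N (l, r) → l < r → SegNode N ((l + r) / 2 + 1, r)

/-- `p` is the parent of the segment-tree node `n`. -/
def SegParent (N : ℕ) (p n : ℕ × ℕ) : Prop :=
  SegNode N p ∧ p.1 < p.2 ∧
    (n = (p.1, (p.1 + p.2) / 2) ∨ n = ((p.1 + p.2) / 2 + 1, p.2))

/-- The canonical set `Z(R)` for the interval `R = [a, b]`: segment-tree nodes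
contained in `R` which are either the root or whose parent is not contained
in `R`. -/
def canonicalZ (N a b : ℕ) : Set (ℕ × ℕ) :=
  {n | SegNode N n ∧ Set.Icc n.1 n.2 ⊆ Set.Icc a b ∧
    (n = (0, N - 1) ∨ ∀ p, SegParent N p n → ¬ Set.Icc p.1 p.2 ⊆ Set.Icc a b)}

/-- Every segment tree node is a nonempty interval. -/
lemma segNode_le {N : ℕ} : ∀ {n : ℕ × ℕ}, SegNode N n → n.1 ≤ n.2 := by
  intro n h
  induction h with
  | root => exact Nat.zero_le _
  | left hq hlt ih => simp; omega
  | right hq hlt ih => simp; omega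

/-- The chain of nodes straddling the gap between `k` and `k+1`, from the root
downwards. -/
def segChain (N k : ℕ) : ℕ → ℕ × ℕ
  | 0 => (0, N - 1)
  | i + 1 =>
    let p := segChain N k i
    if (p.1 + p.2) / 2 ≤ k then ((p.1 + p.2) / 2 + 1, p.2) else (p.1, (p.1 + p.2) / 2)

lemma segChain_covers (N k : ℕ) :
    ∀ {n : ℕ × ℕ}, SegNode N n → n.1 ≤ k → k < n.2 → ∃ i, segChain N k i = n := by
  intro n h
  induction h with
  | root => intro _ _; exact ⟨0, rfl⟩
  | @left l r hq hlt ih =>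
    intro h1 h2
    simp only at h1 h2
    obtain ⟨i, hi⟩ := ih (by omega) (by omega)
    refine ⟨i + 1, ?_⟩
    simp only [segChain, hi]
    rw [if_neg (by omega)]
  | @right l r hq hlt ih =>
    intro h1 h2
    simp only at h1 h2
    obtain ⟨i, hi⟩ := ih (by omega) (by omega)
    refine ⟨i + 1, ?_⟩
    simp only [segChain, hi]
    rw [if_pos (by omega)]

lemma segChain_gap (N k : ℕ) : ∀ i, (segChain N k i).2 - (segChain N k i).1 ≤ (N - 1) / 2 ^ i := by
  intro i
  induction i with
  | zero => simp [segChain]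
  | succ i ih =>
    have h2 : (segChain N k (i + 1)).2 - (segChain N k (i + 1)).1 ≤
        ((segChain N k i).2 - (segChain N k i).1) / 2 := by
      simp only [segChain]
      split <;> simp <;> omega
    calc (segChain N k (i + 1)).2 - (segChain N k (i + 1)).1
        ≤ ((segChain N k i).2 - (segChain N k i).1) / 2 := h2
      _ ≤ ((N - 1) / 2 ^ i) / 2 := Nat.div_le_div_right ih
      _ = (N - 1) / 2 ^ (i + 1) := by rw [Nat.div_div_eq_div_mul, pow_succ]

/-- The straddlers of `k` are among the first `clog 2 N` elements of the chain. -/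
lemma strad_subset (N k : ℕ) (hN : 1 ≤ N) :
    {p : ℕ × ℕ | SegNode N p ∧ p.1 ≤ k ∧ k < p.2} ⊆
      segChain N k '' Set.Iio (Nat.clog 2 N) := by
  rintro p ⟨hp, h1, h2⟩
  obtain ⟨i, hi⟩ := segChain_covers N k hp h1 h2
  refine ⟨i, Set.mem_Iio.mpr ?_, hi⟩
  by_contra hc
  have hge : Nat.clog 2 N ≤ i := by omega
  have hpow : N ≤ 2 ^ i := le_trans (Nat.le_pow_clog one_lt_two N)
    (Nat.pow_le_pow_right (by norm_num) hge)
  have := segChain_gap N k i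
  rw [hi] at this
  have h0 : (N - 1) / 2 ^ i = 0 := Nat.div_eq_of_lt (by omega)
  omega

lemma strad_finite (N k : ℕ) (hN : 1 ≤ N) :
    {p : ℕ × ℕ | SegNode N p ∧ p.1 ≤ k ∧ k < p.2}.Finite :=
  Set.Finite.subset ((Set.finite_Iio _).image _) (strad_subset N k hN)

lemma strad_ncard (N k : ℕ) (hN : 1 ≤ N) :
    {p : ℕ × ℕ | SegNode N p ∧ p.1 ≤ k ∧ k < p.2}.ncard ≤ Nat.clog 2 N := by
  calc {p : ℕ × ℕ | SegNode N p ∧ p.1 ≤ k ∧ k < p.2}.ncard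
      ≤ (segChain N k '' Set.Iio (Nat.clog 2 N)).ncard :=
        Set.ncard_le_ncard (strad_subset N k hN) ((Set.finite_Iio _).image _)
    _ ≤ (Set.Iio (Nat.clog 2 N)).ncard := Set.ncard_image_le (Set.finite_Iio _)
    _ = Nat.clog 2 N := by
        rw [← Finset.coe_range, Set.ncard_coe_finset, Finset.card_range]

/-- The canonical set `Z(R)` contains at most `2⌈log₂ N⌉ + 1` intervals. -/
theorem canonicalZ_card_le (N : ℕ) (hN : 1 ≤ N) (a b : ℕ)
    (hab : a ≤ b) (hbN : b ≤ N - 1) :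
    (canonicalZ N a b).ncard ≤ 2 * Nat.clog 2 N + 1 := by
  classical
  set Sb := {p : ℕ × ℕ | SegNode N p ∧ p.1 ≤ b ∧ b < p.2} with hSb
  set Sa := {p : ℕ × ℕ | SegNode N p ∧ p.1 ≤ a - 1 ∧ a - 1 < p.2} with hSa
  set lc : ℕ × ℕ → ℕ × ℕ := fun p => (p.1, (p.1 + p.2) / 2) with hlc
  set rc : ℕ × ℕ → ℕ × ℕ := fun p => ((p.1 + p.2) / 2 + 1, p.2) with hrc
  have hsub : canonicalZ N a b ⊆ ({(0, N - 1)} : Set (ℕ × ℕ)) ∪ lc '' Sb ∪ rc '' Sa := by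
    rintro n ⟨h1, h2, h3⟩
    have hle : n.1 ≤ n.2 := segNode_le h1
    have hmem1 : a ≤ n.1 ∧ n.1 ≤ b := Set.mem_Icc.mp (h2 (Set.mem_Icc.mpr ⟨le_rfl, hle⟩))
    have hmem2 : a ≤ n.2 ∧ n.2 ≤ b := Set.mem_Icc.mp (h2 (Set.mem_Icc.mpr ⟨hle, le_rfl⟩))
    cases h1 with
    | root => exact Or.inl (Or.inl rfl)
    | @left l r hq hlt =>
      rcases h3 with heq | h3
      · exact Or.inl (Or.inl heq)
      · have hpar : SegParent N (l, r) (l, (l + r) / 2) := ⟨hq, hlt, Or.inl rfl⟩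
        have hnot := h3 _ hpar
        simp only at hmem1 hmem2
        have hbr : b < r := by
          by_contra hh
          exact hnot (Set.Icc_subset_Icc (by omega) (by omega))
        exact Or.inl (Or.inr ⟨(l, r), ⟨hq, by omega, by omega⟩, rfl⟩)
    | @right l r hq hlt =>
      rcases h3 with heq | h3
      · exact Or.inl (Or.inl heq)
      · have hpar : SegParent N (l, r) ((l + r) / 2 + 1, r) := ⟨hq, hlt, Or.inr rfl⟩
        have hnot := h3 _ hpar
        simp only at hmem1 hmem2
        have hla : l < a := by
          by_contra hh
          exact hnot (Set.Icc_subset_Icc (by omega) (by omega))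
        exact Or.inr ⟨(l, r), ⟨hq, by omega, by omega⟩, rfl⟩
  have hfinSb := strad_finite N b hN
  have hfinSa := strad_finite N (a - 1) hN
  have hfin : (({(0, N - 1)} : Set (ℕ × ℕ)) ∪ lc '' Sb ∪ rc '' Sa).Finite :=
    ((Set.finite_singleton _).union (hfinSb.image _)).union (hfinSa.image _)
  calc (canonicalZ N a b).ncard
      ≤ (({(0, N - 1)} : Set (ℕ × ℕ)) ∪ lc '' Sb ∪ rc '' Sa).ncard :=
        Set.ncard_le_ncard hsub hfin
    _ ≤ (({(0, N - 1)} : Set (ℕ × ℕ)) ∪ lc '' Sb).ncard + (rc '' Sa).ncard :=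
        Set.ncard_union_le _ _
    _ ≤ (({(0, N - 1)} : Set (ℕ × ℕ)).ncard + (lc '' Sb).ncard) + (rc '' Sa).ncard :=
        Nat.add_le_add_right (Set.ncard_union_le _ _) _
    _ ≤ (1 + Sb.ncard) + Sa.ncard := by
        have h1 := Set.ncard_image_le (f := lc) hfinSb
        have h2 := Set.ncard_image_le (f := rc) hfinSa
        have h3 : ({(0, N - 1)} : Set (ℕ × ℕ)).ncard = 1 := Set.ncard_singleton _
        rw [← hSb] at h1
        rw [← hSa] at h2
        omega
    _ ≤ (1 + Nat.clog 2 N) + Nat.clog 2 N := by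
        have h1 := strad_ncard N b hN
        have h2 := strad_ncard N (a - 1) hN
        rw [← hSb] at h1
        rw [← hSa] at h2
        omega
    _ = 2 * Nat.clog 2 N + 1 := by ring
end

section
/- For every integer N ≥ 1, every interval R = [a, b] with 0 ≤ a ≤ b ≤ N−1, and every segment-tree node n such that n ∩ R ≠ ∅ and n ⊄ R, there exists an interval m ∈ Z(R) with m ⊆ n. (This is the claim that every node whose stored value must be recomputed during an update of R is an ancestor of some node in the canonical set Z(R).) -/
/-- descendant-or-equal relation -/
inductive Desc (N : ℕ) : ℕ × ℕ → ℕ × ℕ → Prop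
  | refl (p) : Desc N p p
  | left {p : ℕ × ℕ} {l r : ℕ} : Desc N p (l, r) → l < r → Desc N p (l, (l + r) / 2)
  | right {p : ℕ × ℕ} {l r : ℕ} : Desc N p (l, r) → l < r → Desc N p ((l + r) / 2 + 1, r)

lemma seg_le {N : ℕ} {n : ℕ × ℕ} (h : SegNode N n) : n.1 ≤ n.2 := by
  induction h with
  | root => simp
  | left _ h ih => simp only at *; omega
  | right _ h ih => simp only at *; omega

lemma desc_seg {N : ℕ} {p v : ℕ × ℕ} (hp : SegNode N p) (h : Desc N p v) : SegNode N v := by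
  induction h with
  | refl => exact hp
  | left _ hlr ih => exact ih.left hlr
  | right _ hlr ih => exact ih.right hlr

lemma desc_sub {N : ℕ} {p v : ℕ × ℕ} (h : Desc N p v) :
    Set.Icc v.1 v.2 ⊆ Set.Icc p.1 p.2 := by
  induction h with
  | refl => exact subset_rfl
  | left _ hlr ih =>
      exact (Set.Icc_subset_Icc le_rfl (by omega)).trans ih
  | right _ hlr ih =>
      exact (Set.Icc_subset_Icc (by omega) le_rfl).trans ih

lemma desc_cases {N : ℕ} {p v : ℕ × ℕ} (h : Desc N p v) :
    v = p ∨ (p.1 < p.2 ∧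
      (Desc N (p.1, (p.1 + p.2) / 2) v ∨ Desc N ((p.1 + p.2) / 2 + 1, p.2) v)) := by
  induction h with
  | refl => exact Or.inl rfl
  | left h hlr ih =>
      rcases ih with h' | ⟨hp, hc⟩
      · rcases h' with rfl
        exact Or.inr ⟨hlr, Or.inl (Desc.refl _)⟩
      · rcases hc with hc | hc
        · exact Or.inr ⟨hp, Or.inl (hc.left hlr)⟩
        · exact Or.inr ⟨hp, Or.inr (hc.left hlr)⟩
  | right h hlr ih =>
      rcases ih with h' | ⟨hp, hc⟩
      · rcases h' with rfl
        exact Or.inr ⟨hlr, Or.inr (Desc.refl _)⟩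
      · rcases hc with hc | hc
        · exact Or.inr ⟨hp, Or.inl (hc.right hlr)⟩
        · exact Or.inr ⟨hp, Or.inr (hc.right hlr)⟩

lemma comparable {N : ℕ} : ∀ k (p : ℕ × ℕ), SegNode N p → p.2 - p.1 ≤ k →
    ∀ u v, Desc N p u → Desc N p v →
    (Set.Icc u.1 u.2 ∩ Set.Icc v.1 v.2).Nonempty →
    Desc N u v ∨ Desc N v u := by
  intro k
  induction k using Nat.strong_induction_on with
  | _ k ih =>
    intro p hp hk u v hu hv hne
    rcases desc_cases hu with rfl | ⟨hplt, hcu⟩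
    · exact Or.inl hv
    rcases desc_cases hv with rfl | ⟨_, hcv⟩
    · exact Or.inr hu
    obtain ⟨l, r⟩ := p
    simp only at hplt hk hcu hcv
    rcases hcu with hcu | hcu <;> rcases hcv with hcv | hcv
    · exact ih ((l + r) / 2 - l) (by omega) (l, (l + r) / 2) (hp.left hplt) le_rfl
        u v hcu hcv hne
    · exfalso
      obtain ⟨x, hx1, hx2⟩ := hne
      have h1 := desc_sub hcu hx1
      have h2 := desc_sub hcv hx2
      simp only [Set.mem_Icc] at h1 h2
      omega
    · exfalso
      obtain ⟨x, hx1, hx2⟩ := hne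
      have h1 := desc_sub hcu hx1
      have h2 := desc_sub hcv hx2
      simp only [Set.mem_Icc] at h1 h2
      omega
    · exact ih (r - ((l + r) / 2 + 1)) (by omega) ((l + r) / 2 + 1, r) (hp.right hplt)
        le_rfl u v hcu hcv hne

lemma seg_desc_root {N : ℕ} {n : ℕ × ℕ} (h : SegNode N n) : Desc N (0, N - 1) n := by
  induction h with
  | root => exact Desc.refl _
  | left _ hlr ih => exact ih.left hlr
  | right _ hlr ih => exact ih.right hlr

lemma parent_unique_aux {N : ℕ} {p p' c : ℕ × ℕ}
    (hpc : SegParent N p c) (hp'c : SegParent N p' c) (hd : Desc N p p') : p = p' := by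
  rcases desc_cases hd with h | ⟨hlt, hch⟩
  · exact h.symm
  exfalso
  obtain ⟨hp, hplt, hcc⟩ := hpc
  obtain ⟨hp', hp'lt, hcc'⟩ := hp'c
  have hp'seg : SegNode N p' := hp'
  have hp'le : p'.1 ≤ p'.2 := seg_le hp'seg
  -- size of c is strictly less than size of p', and c ⊆ p'
  have hcsub : Set.Icc c.1 c.2 ⊆ Set.Icc p'.1 p'.2 := by
    rcases hcc' with rfl | rfl
    · exact Set.Icc_subset_Icc le_rfl (by simp only; omega)
    · exact Set.Icc_subset_Icc (by simp only; omega) le_rfl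
  have hcsz : c.2 - c.1 < p'.2 - p'.1 := by
    rcases hcc' with rfl | rfl <;> simp only <;> omega
  have hcle : c.1 ≤ c.2 := by
    rcases hcc' with rfl | rfl <;> simp only <;> omega
  obtain ⟨l, r⟩ := p
  simp only at hlt hcc hch
  rcases hch with hch | hch <;>
    have hsub2 := desc_sub hch <;>
    simp only at hsub2 <;>
    have e1 := hsub2 (Set.left_mem_Icc.2 hp'le) <;>
    have e2 := hsub2 (Set.right_mem_Icc.2 hp'le) <;>
    simp only [Set.mem_Icc] at e1 e2 <;>
    have f1 := hcsub (Set.left_mem_Icc.2 hcle) <;>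
    have f2 := hcsub (Set.right_mem_Icc.2 hcle) <;>
    simp only [Set.mem_Icc] at f1 f2 <;>
    rcases hcc with rfl | rfl <;>
    simp only at f1 f2 hcsz hcle <;>
    omega

lemma parent_unique {N : ℕ} {p p' c : ℕ × ℕ}
    (hpc : SegParent N p c) (hp'c : SegParent N p' c) : p = p' := by
  have hcle : c.1 ≤ c.2 := by
    obtain ⟨_, hlt, hcc⟩ := hpc
    rcases hcc with rfl | rfl <;> simp only <;> omega
  have hsubp : Set.Icc c.1 c.2 ⊆ Set.Icc p.1 p.2 := by
    obtain ⟨_, hlt, hcc⟩ := hpc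
    rcases hcc with rfl | rfl
    · exact Set.Icc_subset_Icc le_rfl (by simp only; omega)
    · exact Set.Icc_subset_Icc (by simp only; omega) le_rfl
  have hsubp' : Set.Icc c.1 c.2 ⊆ Set.Icc p'.1 p'.2 := by
    obtain ⟨_, hlt, hcc⟩ := hp'c
    rcases hcc with rfl | rfl
    · exact Set.Icc_subset_Icc le_rfl (by simp only; omega)
    · exact Set.Icc_subset_Icc (by simp only; omega) le_rfl
  have hne : (Set.Icc p.1 p.2 ∩ Set.Icc p'.1 p'.2).Nonempty :=
    ⟨c.1, hsubp (Set.left_mem_Icc.2 hcle), hsubp' (Set.left_mem_Icc.2 hcle)⟩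
  have hcomp := comparable (N := N) (N - 1) (0, N - 1) SegNode.root (by simp)
    p p' (seg_desc_root hpc.1) (seg_desc_root hp'c.1) hne
  rcases hcomp with hd | hd
  · exact parent_unique_aux hpc hp'c hd
  · exact (parent_unique_aux hp'c hpc hd).symm


/-- Every segment-tree node that intersects `R` without being contained in `R`
contains some interval of the canonical set `Z(R)`. -/
theorem canonicalZ_descendant (N : ℕ) (hN : 1 ≤ N) (a b : ℕ)
    (hab : a ≤ b) (hbN : b ≤ N - 1) :
    ∀ n : ℕ × ℕ, SegNode N n → (Set.Icc n.1 n.2 ∩ Set.Icc a b).Nonempty →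
      ¬ Set.Icc n.1 n.2 ⊆ Set.Icc a b →
      ∃ m ∈ canonicalZ N a b, Set.Icc m.1 m.2 ⊆ Set.Icc n.1 n.2 := by
  suffices key : ∀ k (n : ℕ × ℕ), n.2 - n.1 ≤ k → SegNode N n →
      (Set.Icc n.1 n.2 ∩ Set.Icc a b).Nonempty →
      ¬ Set.Icc n.1 n.2 ⊆ Set.Icc a b →
      ∃ m ∈ canonicalZ N a b, Set.Icc m.1 m.2 ⊆ Set.Icc n.1 n.2 by
    intro n hn h1 h2
    exact key _ n le_rfl hn h1 h2
  intro k
  induction k using Nat.strong_induction_on with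
  | _ k ih =>
    intro n hk hn hne hns
    have hle : n.1 ≤ n.2 := seg_le hn
    obtain ⟨l, r⟩ := n
    simp only at hk hle hne hns ⊢
    by_cases hlt : l < r
    · obtain ⟨y, hy1, hy2⟩ := hne
      simp only [Set.mem_Icc] at hy1
      have step : ∀ c : ℕ × ℕ, SegParent N (l, r) c → Set.Icc c.1 c.2 ⊆ Set.Icc l r →
          c.2 - c.1 < r - l → (Set.Icc c.1 c.2 ∩ Set.Icc a b).Nonempty →
          ∃ m ∈ canonicalZ N a b, Set.Icc m.1 m.2 ⊆ Set.Icc l r := by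
        intro c hpar hsub hsz hint
        have hc : SegNode N c := by
          rcases hpar.2.2 with rfl | rfl
          · exact hn.left hlt
          · exact hn.right hlt
        by_cases hcr : Set.Icc c.1 c.2 ⊆ Set.Icc a b
        · refine ⟨c, ⟨hc, hcr, Or.inr fun p hp => ?_⟩, hsub⟩
          rw [parent_unique hp hpar]
          exact hns
        · obtain ⟨m, hm, hmc⟩ := ih (c.2 - c.1) (by omega) c le_rfl hc hint hcr
          exact ⟨m, hm, hmc.trans hsub⟩
      rcases le_or_gt y ((l + r) / 2) with hy | hy
      · exact step (l, (l + r) / 2) ⟨hn, hlt, Or.inl rfl⟩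
          (Set.Icc_subset_Icc le_rfl (by omega)) (by omega)
          ⟨y, Set.mem_Icc.2 ⟨hy1.1, hy⟩, hy2⟩
      · exact step ((l + r) / 2 + 1, r) ⟨hn, hlt, Or.inr rfl⟩
          (Set.Icc_subset_Icc (by omega) le_rfl) (by omega)
          ⟨y, Set.mem_Icc.2 ⟨hy, hy1.2⟩, hy2⟩
    · exfalso
      have hlr : l = r := by omega
      subst hlr
      obtain ⟨y, hy1, hy2⟩ := hne
      simp only [Set.mem_Icc] at hy1
      have : y = l := by omega
      subst this
      exact hns (by intro x hx; simp only [Set.mem_Icc] at hx; have : x = y := by omega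
                    subst this; exact hy2)
end

section
/- Let N, M ≥ 1 and consider any tree of nodes over E = {0, …, N−1} × {0, …, M−1}. Then for every point (x, y) ∈ E, at least one of the following holds: there is no tree node n with cover(n) ⊆ {x} × {0, …, M−1}, (x, y) ∈ cover(n), and |cover(n)| > 1; or there is no tree node n with cover(n) ⊆ {0, …, N−1} × {y}, (x, y) ∈ cover(n), and |cover(n)| > 1. (Consequently, any node representation of the row through (x, y) or any node representation of the column through (x, y) must contain the node whose cover is exactly {(x, y)}.) -/
/-- A tree of nodes over a finite nonempty set `E`: a finite rooted tree
together with an assignment of a nonempty subset `cover n ⊆ E` to each tree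
node `n` such that the root covers `E`; for every node with children, the
covers of its children are pairwise disjoint and their union equals the cover
of the node; every node covering more than one element has at least two
children; and every node covering exactly one element has no children. -/
structure NodeTree (E : Type*) where
  /-- The (finite) type of tree nodes. -/
  ι : Type
  instFintype : Fintype ι
  /-- The root node. -/
  root : ι
  /-- The set of children of each node. -/
  children : ι → Finset ι
  /-- The subset of `E` covered by each node. -/
  cover : ι → Set E
  cover_nonempty : ∀ n, (cover n).Nonempty
  root_cover : cover root = Set.univ
  children_disjoint : ∀ n, ∀ c₁ ∈ children n, ∀ c₂ ∈ children n,
    c₁ ≠ c₂ → Disjoint (cover c₁) (cover c₂)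
  children_union : ∀ n, (children n).Nonempty →
    ⋃ c ∈ children n, cover c = cover n
  two_children : ∀ n, 1 < (cover n).ncard → 2 ≤ (children n).card
  no_children : ∀ n, (cover n).ncard = 1 → children n = ∅
  root_not_child : ∀ n, root ∉ children n
  parent_unique : ∀ c p₁ p₂, c ∈ children p₁ → c ∈ children p₂ → p₁ = p₂
  reachable : ∀ n, Relation.ReflTransGen (fun p c => c ∈ children p) root n

lemma NodeTree.cover_child_subset {E : Type*} (T : NodeTree E) {p c : T.ι}
    (hc : c ∈ T.children p) : T.cover c ⊆ T.cover p := by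
  rw [← T.children_union p ⟨c, hc⟩]
  exact Set.subset_biUnion_of_mem hc

lemma NodeTree.cover_subset_of_rtg {E : Type*} (T : NodeTree E)
    {a b : T.ι} (h : Relation.ReflTransGen (fun p c => c ∈ T.children p) a b) :
    T.cover b ⊆ T.cover a := by
  induction h with
  | refl => exact subset_rfl
  | tail _ step ih => exact subset_trans (T.cover_child_subset step) ih

lemma NodeTree.cover_ncard_lt {E : Type*} [Finite E] (T : NodeTree E) {p c : T.ι}
    (hc : c ∈ T.children p) : (T.cover c).ncard < (T.cover p).ncard := by
  have hfin : (T.cover p).Finite := Set.toFinite _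
  have hsub : T.cover c ⊆ T.cover p := T.cover_child_subset hc
  have h1 : (T.cover p).ncard ≠ 1 := fun h => by simpa [T.no_children p h] using hc
  have hpos : 0 < (T.cover p).ncard :=
    (T.cover_nonempty p).ncard_pos hfin
  have h2 : 1 < (T.cover p).ncard := lt_of_le_of_ne hpos (Ne.symm h1)
  have hcard := T.two_children p h2
  obtain ⟨c', hc', hne⟩ : ∃ c' ∈ T.children p, c' ≠ c := by
    by_contra hcon
    push_neg at hcon
    have hss : T.children p ⊆ {c} := fun z hz => Finset.mem_singleton.mpr (hcon z hz)
    have := Finset.card_le_card hss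
    simp at this
    omega
  have hdisj := T.children_disjoint p c' hc' c hc hne
  obtain ⟨e, he⟩ := T.cover_nonempty c'
  have hec : e ∉ T.cover c := fun h => Set.disjoint_left.mp hdisj he h
  have hep : e ∈ T.cover p := T.cover_child_subset hc' he
  exact Set.ncard_lt_ncard ((Set.ssubset_iff_of_subset hsub).mpr ⟨e, hep, hec⟩) hfin

lemma NodeTree.laminar {E : Type*} [Finite E] (T : NodeTree E) :
    ∀ (n : ℕ) (r a b : T.ι), (T.cover r).ncard = n →
      Relation.ReflTransGen (fun p c => c ∈ T.children p) r a →
      Relation.ReflTransGen (fun p c => c ∈ T.children p) r b →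
      (T.cover a ∩ T.cover b).Nonempty →
      T.cover a ⊆ T.cover b ∨ T.cover b ⊆ T.cover a := by
  intro n
  induction n using Nat.strong_induction_on with
  | _ n ih =>
    intro r a b hn ha hb hab
    rcases Relation.ReflTransGen.cases_head ha with rfl | ⟨c1, hc1, ha'⟩
    · exact Or.inr (T.cover_subset_of_rtg hb)
    rcases Relation.ReflTransGen.cases_head hb with rfl | ⟨c2, hc2, hb'⟩
    · exact Or.inl (T.cover_subset_of_rtg ha)
    by_cases hcc : c1 = c2
    · subst hcc
      exact ih _ (hn ▸ T.cover_ncard_lt hc1) c1 a b rfl ha' hb' hab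
    · exfalso
      obtain ⟨e, he1, he2⟩ := hab
      exact Set.disjoint_left.mp (T.children_disjoint r c1 hc1 c2 hc2 hcc)
        (T.cover_subset_of_rtg ha' he1) (T.cover_subset_of_rtg hb' he2)

/-- For any tree of nodes over the grid `{0,…,N−1} × {0,…,M−1}` (with
`N, M ≥ 1`) and any point `(x, y)`, there is no tree node covering `(x, y)`
with more than one element whose cover lies inside the row through `(x, y)`,
or there is no such node whose cover lies inside the column through `(x, y)`. -/
theorem tree_row_or_column_singleton (N M : ℕ) (hN : 1 ≤ N) (hM : 1 ≤ M)
    (T : NodeTree (Fin N × Fin M)) (x : Fin N) (y : Fin M) :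
    (¬ ∃ n : T.ι, T.cover n ⊆ {p | p.1 = x} ∧ (x, y) ∈ T.cover n ∧
        1 < (T.cover n).ncard) ∨
    (¬ ∃ n : T.ι, T.cover n ⊆ {p | p.2 = y} ∧ (x, y) ∈ T.cover n ∧
        1 < (T.cover n).ncard) := by
  by_contra hcon
  push_neg at hcon
  obtain ⟨⟨n1, hrow, hm1, hc1⟩, ⟨n2, hcol, hm2, hc2⟩⟩ := hcon
  have hab : (T.cover n1 ∩ T.cover n2).Nonempty := ⟨(x, y), hm1, hm2⟩
  have hsingle : ∀ p, p ∈ T.cover n1 → p ∈ T.cover n2 → p = (x, y) := by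
    intro p hp1 hp2
    have h1 : p.1 = x := hrow hp1
    have h2 : p.2 = y := hcol hp2
    exact Prod.ext h1 h2
  have hlam := T.laminar _ T.root n1 n2 rfl (T.reachable n1) (T.reachable n2) hab
  have hle : ∀ s : Set (Fin N × Fin M), s ⊆ {((x, y) : Fin N × Fin M)} → s.ncard ≤ 1 := by
    intro s hs
    calc s.ncard ≤ ({((x, y) : Fin N × Fin M)} : Set (Fin N × Fin M)).ncard :=
          Set.ncard_le_ncard hs (Set.finite_singleton _)
      _ = 1 := Set.ncard_singleton _
  rcases hlam with h | h
  · have hs : T.cover n1 ⊆ {((x, y) : Fin N × Fin M)} := fun p hp =>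
      hsingle p hp (h hp)
    have := hle _ hs
    omega
  · have hs : T.cover n2 ⊆ {((x, y) : Fin N × Fin M)} := fun p hp =>
      hsingle p (h hp) hp
    have := hle _ hs
    omega
end
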